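/- Let h : R → S be a ring homomorphism. If S is finitely generated and projective as an R-module, then for all R-modules M, N the natural map S ⊗_R Hom_R(M, N) → Hom_S(S ⊗_R M, S ⊗_R N), sending s ⊗ u to the S-linear map r ⊗ x ↦ (rs) ⊗ u(x), is bijective. -/

import Mathlib

open TensorProduct

universe u

section Aux

variable (R : Type u) [CommRing R] (M Q : Type u)
  [AddCommGroup M] [Module R M] [AddCommGroup Q] [Module R Q]

/-- Naturality of `lTensorHomToHomLTensor` in the first tensor factor. -/
lemma lTensorHomToHomLTensor_natural {P P' : Type u} [AddCommGroup P] [Module R P]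
    [AddCommGroup P'] [Module R P'] (f : P →ₗ[R] P') (x : P ⊗[R] (M →ₗ[R] Q)) :
    TensorProduct.lTensorHomToHomLTensor (RingHom.id R) M P' Q (f.rTensor _ x) =
      (f.rTensor Q).comp (TensorProduct.lTensorHomToHomLTensor (RingHom.id R) M P Q x) := by
  induction x using TensorProduct.induction_on with
  | zero => simp
  | tmul p u => ext m; simp
  | add a b ha hb => simp [map_add, ha, hb, LinearMap.add_comp, LinearMap.comp_add]

/-- The finite free case: `lTensorHomToHomLTensor` is bijective when the
first tensor factor is `Fin n → R`. -/
lemma bijective_lTensorHomToHomLTensor_pi (n : ℕ) :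
    Function.Bijective (TensorProduct.lTensorHomToHomLTensor (RingHom.id R) M (Fin n → R) Q) := by
  classical
  set e : ((Fin n → R) ⊗[R] Q) ≃ₗ[R] (Fin n → Q) :=
    (TensorProduct.comm R (Fin n → R) Q).trans (TensorProduct.piScalarRight R R Q (Fin n))
    with he
  have e_tmul : ∀ (p : Fin n → R) (q : Q), e (p ⊗ₜ q) = fun j => p j • q := by
    intro p q; simp [he]
  have single_smul : ∀ (i : Fin n) (c : R),
      c • (Pi.single i (1 : R) : Fin n → R) = Pi.single i c := by
    intro i c
    funext j
    by_cases h : j = i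
    · subst h; simp
    · simp [Pi.single_apply, h]
  set φ := TensorProduct.lTensorHomToHomLTensor (RingHom.id R) M (Fin n → R) Q with hφ
  set ψ : (M →ₗ[R] (Fin n → R) ⊗[R] Q) →ₗ[R] ((Fin n → R) ⊗[R] (M →ₗ[R] Q)) :=
    ∑ i, (TensorProduct.mk R (Fin n → R) (M →ₗ[R] Q) (Pi.single i (1 : R))).comp
      (LinearMap.llcomp R M ((Fin n → R) ⊗[R] Q) Q
        ((LinearMap.proj i).comp e.toLinearMap)) with hψ
  have ψ_apply : ∀ g : M →ₗ[R] (Fin n → R) ⊗[R] Q,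
      ψ g = ∑ i, (Pi.single i (1 : R) : Fin n → R) ⊗ₜ[R]
        (((LinearMap.proj i).comp e.toLinearMap).comp g) := by
    intro g
    simp only [hψ, LinearMap.sum_apply, LinearMap.coe_comp, Function.comp_apply,
      TensorProduct.mk_apply, LinearMap.llcomp_apply]
    rfl
  constructor
  · -- injective
    have left : ψ.comp φ = LinearMap.id := by
      apply TensorProduct.ext'
      intro p u
      simp only [LinearMap.coe_comp, Function.comp_apply, LinearMap.id_coe, id_eq]
      rw [ψ_apply]
      have key : ∀ i : Fin n,
          ((LinearMap.proj (R := R) i).comp e.toLinearMap).comp (φ (p ⊗ₜ u)) = p i • u := by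
        intro i; ext x
        simp only [LinearMap.comp_apply, LinearEquiv.coe_coe, LinearMap.proj_apply,
          LinearMap.smul_apply, hφ, TensorProduct.lTensorHomToHomLTensor_apply]
        rw [e_tmul]
      calc (∑ i, (Pi.single i (1:R) : Fin n → R) ⊗ₜ[R]
              (((LinearMap.proj i).comp e.toLinearMap).comp (φ (p ⊗ₜ u))))
          = ∑ i, (Pi.single i (p i) : Fin n → R) ⊗ₜ[R] u := by
            refine Finset.sum_congr rfl fun i _ => ?_
            rw [key, TensorProduct.tmul_smul, TensorProduct.smul_tmul', single_smul]
        _ = (∑ i, (Pi.single i (p i) : Fin n → R)) ⊗ₜ[R] u := by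
            rw [TensorProduct.sum_tmul]
        _ = p ⊗ₜ[R] u := by rw [Finset.univ_sum_single]
    intro a b hab
    have := congrArg ψ hab
    calc a = ψ.comp φ a := by rw [left]; rfl
      _ = ψ.comp φ b := by simpa using this
      _ = b := by rw [left]; rfl
  · -- surjective
    intro g
    refine ⟨ψ g, ?_⟩
    ext x
    apply e.injective
    rw [ψ_apply, map_sum, LinearMap.sum_apply, map_sum]
    have : ∀ i : Fin n,
        e (φ ((Pi.single i (1:R) : Fin n → R) ⊗ₜ[R]
            (((LinearMap.proj i).comp e.toLinearMap).comp g)) x)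
          = Pi.single i ((e (g x)) i) := by
      intro i
      rw [hφ, TensorProduct.lTensorHomToHomLTensor_apply, e_tmul]
      funext j
      by_cases h : j = i
      · subst h; simp
      · simp [Pi.single_apply, h]
    rw [Finset.sum_congr rfl fun i _ => this i, Finset.univ_sum_single]

/-- Projective finite case. -/
lemma bijective_lTensorHomToHomLTensor_of_projective (S : Type u) [AddCommGroup S]
    [Module R S] [Module.Projective R S] [Module.Finite R S] :
    Function.Bijective (TensorProduct.lTensorHomToHomLTensor (RingHom.id R) M S Q) := by
  obtain ⟨n, π, hπ⟩ := Module.Finite.exists_fin' R S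
  obtain ⟨σ, hσ⟩ := π.exists_rightInverse_of_surjective (LinearMap.range_eq_top.2 hπ)
  have hF := bijective_lTensorHomToHomLTensor_pi R M Q n
  set eF := LinearEquiv.ofBijective _ hF with heF
  have eF_apply : ∀ x, eF x = TensorProduct.lTensorHomToHomLTensor (RingHom.id R) M (Fin n → R) Q x :=
    fun x => rfl
  set ψ : ((M →ₗ[R] S ⊗[R] Q)) → (S ⊗[R] (M →ₗ[R] Q)) :=
    fun g => π.rTensor (M →ₗ[R] Q) (eF.symm ((σ.rTensor Q).comp g)) with hψ
  have key : ∀ x, ψ (TensorProduct.lTensorHomToHomLTensor (RingHom.id R) M S Q x) = x := by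
    intro x
    rw [hψ]
    dsimp only
    rw [← lTensorHomToHomLTensor_natural R M Q σ x, ← eF_apply,
      LinearEquiv.symm_apply_apply, ← LinearMap.comp_apply, ← LinearMap.rTensor_comp, hσ,
      LinearMap.rTensor_id, LinearMap.id_apply]
  constructor
  · intro a b hab
    calc a = ψ (TensorProduct.lTensorHomToHomLTensor (RingHom.id R) M S Q a) := (key a).symm
      _ = ψ (TensorProduct.lTensorHomToHomLTensor (RingHom.id R) M S Q b) := by rw [hab]
      _ = b := key b
  · intro g
    refine ⟨ψ g, ?_⟩
    rw [hψ]
    dsimp only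
    rw [lTensorHomToHomLTensor_natural R M Q π]
    have h2 : TensorProduct.lTensorHomToHomLTensor (RingHom.id R) M (Fin n → R) Q
        (eF.symm ((σ.rTensor Q).comp g)) = (σ.rTensor Q).comp g := by
      rw [← eF_apply, LinearEquiv.apply_symm_apply]
    rw [h2, ← LinearMap.comp_assoc, ← LinearMap.rTensor_comp, hσ,
      LinearMap.rTensor_id, LinearMap.id_comp]

end Aux

/-- The base-change map `ϑ : S ⊗[R] Hom_R(M, N) → Hom_S(S ⊗[R] M, S ⊗[R] N)`,
`s ⊗ u ↦ (r ⊗ x ↦ (r * s) ⊗ u x)`. -/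
noncomputable def thetaMap (R : Type u) [CommRing R] (S : Type u) [CommRing S] [Algebra R S]
    (M N : Type u) [AddCommGroup M] [Module R M] [AddCommGroup N] [Module R N] :
    (S ⊗[R] (M →ₗ[R] N)) →ₗ[R] ((S ⊗[R] M) →ₗ[S] (S ⊗[R] N)) :=
  TensorProduct.lift <| LinearMap.mk₂ R
    (fun s u => s • LinearMap.baseChange S u)
    (fun s s' u => by beta_reduce; rw [add_smul])
    (fun r s u => by beta_reduce; rw [smul_assoc])
    (fun s u u' => by beta_reduce; rw [LinearMap.baseChange_add, smul_add])
    (fun r s u => by beta_reduce; rw [LinearMap.baseChange_smul, smul_comm])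

theorem stmt19 (R : Type u) [CommRing R] (S : Type u) [CommRing S] [Algebra R S]
    (hproj : Module.Projective R S) (hfg : Module.Finite R S)
    (M N : Type u) [AddCommGroup M] [Module R M] [AddCommGroup N] [Module R N] :
    Function.Bijective (thetaMap R S M N) := by
  haveI := hproj
  haveI := hfg
  have hcomp : ∀ z : S ⊗[R] (M →ₗ[R] N),
      thetaMap R S M N z =
        LinearMap.liftBaseChangeEquiv S (TensorProduct.lTensorHomToHomLTensor (RingHom.id R) M S N z) := by
    intro z
    induction z using TensorProduct.induction_on with
    | zero => simp
    | tmul s u =>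
      refine LinearMap.ext fun y => ?_
      show (s • u.baseChange S) y = _
      induction y using TensorProduct.induction_on with
      | zero => simp
      | tmul r x =>
        show s • (r ⊗ₜ[R] u x) = r • (s ⊗ₜ[R] u x)
        rw [TensorProduct.smul_tmul', TensorProduct.smul_tmul', smul_eq_mul, smul_eq_mul,
          mul_comm]
      | add a b ha hb => simp [map_add, ha, hb]
    | add a b ha hb => simp [map_add, ha, hb]
  have hfun : ⇑(thetaMap R S M N) =
      ⇑(LinearMap.liftBaseChangeEquiv S) ∘ ⇑(TensorProduct.lTensorHomToHomLTensor (RingHom.id R) M S N) :=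
    funext hcomp
  rw [hfun]
  exact (LinearMap.liftBaseChangeEquiv S).bijective.comp
    (bijective_lTensorHomToHomLTensor_of_projective R M N S)
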